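/- In the Minsky-machine encoding into Boolean PCF with exceptions, the encoded counter correctly implements zero-test and decrement: for every n, the term try (⟦n⟧ (); K₀) with Ex_{unit→unit}(c) → K₁[c] reduces to K₀ if n = 0, and reduces to K₁[⟦n-1⟧] if n > 0, where ⟦0⟧ = λx.x and ⟦n+1⟧ = λx.raise Ex(⟦n⟧). -/
import Mathlib


/-- Simple types of Boolean PCF. -/
inductive Ty : Type where
  | unit
  | bool
  | arr (a b : Ty)
  deriving DecidableEq

/-- Terms of call-by-value Boolean PCF with exceptions (de Bruijn indices).
There is a single exception constructor `Ex` carrying values of type `unit → unit`.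
`fix m` stands for `Y(λf.λx.m)` (index 0 is `x`, index 1 is `f`);
`tryc m h` stands for `try m with Ex(x) → h` (in `h`, index 0 is `x`). -/
inductive Tm : Type where
  | fail
  | unit
  | tt
  | ff
  | var (n : ℕ)
  | lam (m : Tm)
  | app (m n : Tm)
  | fix (m : Tm)
  | ite (c t e : Tm)
  | raise (m : Tm)
  | tryc (m h : Tm)
  deriving DecidableEq

def shift (c : ℕ) : Tm → Tm
  | .var n => if n < c then .var n else .var (n + 1)
  | .lam m => .lam (shift (c + 1) m)
  | .app m n => .app (shift c m) (shift c n)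
  | .fix m => .fix (shift (c + 2) m)
  | .ite a b d => .ite (shift c a) (shift c b) (shift c d)
  | .raise m => .raise (shift c m)
  | .tryc m h => .tryc (shift c m) (shift (c + 1) h)
  | .fail => .fail
  | .unit => .unit
  | .tt => .tt
  | .ff => .ff

def subst (k : ℕ) (s : Tm) : Tm → Tm
  | .var n => if n = k then s else if k < n then .var (n - 1) else .var n
  | .lam m => .lam (subst (k + 1) (shift 0 s) m)
  | .app m n => .app (subst k s m) (subst k s n)
  | .fix m => .fix (subst (k + 2) (shift 0 (shift 0 s)) m)
  | .ite a b d => .ite (subst k s a) (subst k s b) (subst k s d)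
  | .raise m => .raise (subst k s m)
  | .tryc m h => .tryc (subst k s m) (subst (k + 1) (shift 0 s) h)
  | .fail => .fail
  | .unit => .unit
  | .tt => .tt
  | .ff => .ff

inductive IsValue : Tm → Prop where
  | unit : IsValue .unit
  | tt : IsValue .tt
  | ff : IsValue .ff
  | lam (m : Tm) : IsValue (.lam m)

/-- Evaluation contexts
`E ::= [] | E M | V E | if E then M₁ else M₂ | raise E | try E with Ex(x) → M`. -/
inductive Ctx : Type where
  | hole
  | appL (E : Ctx) (m : Tm)
  | appR (v : Tm) (E : Ctx)
  | ite (E : Ctx) (t e : Tm)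
  | raiseC (E : Ctx)
  | tryC (E : Ctx) (h : Tm)

def plug : Ctx → Tm → Tm
  | .hole, t => t
  | .appL E m, t => .app (plug E t) m
  | .appR v E, t => .app v (plug E t)
  | .ite E a b, t => .ite (plug E t) a b
  | .raiseC E, t => .raise (plug E t)
  | .tryC E h, t => .tryc (plug E t) h

inductive CtxOk : Ctx → Prop where
  | hole : CtxOk .hole
  | appL {E m} : CtxOk E → CtxOk (.appL E m)
  | appR {v E} : IsValue v → CtxOk E → CtxOk (.appR v E)
  | ite {E a b} : CtxOk E → CtxOk (.ite E a b)
  | raiseC {E} : CtxOk E → CtxOk (.raiseC E)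
  | tryC {E h} : CtxOk E → CtxOk (.tryC E h)

/-- Contexts containing no `try` frame. -/
inductive NoTry : Ctx → Prop where
  | hole : NoTry .hole
  | appL {E m} : NoTry E → NoTry (.appL E m)
  | appR {v E} : NoTry E → NoTry (.appR v E)
  | ite {E a b} : NoTry E → NoTry (.ite E a b)
  | raiseC {E} : NoTry E → NoTry (.raiseC E)

inductive Redex : Tm → Tm → Prop where
  | beta {m v} : IsValue v → Redex (.app (.lam m) v) (subst 0 v m)
  | iteT {a b} : Redex (.ite .tt a b) a
  | iteF {a b} : Redex (.ite .ff a b) b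
  | fix {m} : Redex (.fix m) (.lam (subst 1 (shift 0 (.fix m)) m))

/-- Small-step reduction for Boolean PCF with exceptions. -/
inductive StepE : Tm → Tm → Prop where
  | ctx {E r r'} : CtxOk E → Redex r r' → StepE (plug E r) (plug E r')
  | fail {E} : CtxOk E → StepE (plug E .fail) .fail
  | tryVal {E v h} : CtxOk E → IsValue v → StepE (plug E (.tryc v h)) (plug E v)
  | tryRaise {E E' v h} : CtxOk E → CtxOk E' → NoTry E' → IsValue v →
      StepE (plug E (.tryc (plug E' (.raise v)) h)) (plug E (subst 0 v h))

/-- The exception-based encoding of natural numbers: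
`⟦0⟧ = λx.x` and `⟦n+1⟧ = λx.raise Ex(⟦n⟧)`. -/
def encNat : ℕ → Tm
  | 0 => .lam (.var 0)
  | n + 1 => .lam (.raise (encNat n))

/-- Sequencing `M₁; M₂ = (λx.M₂) M₁` with `x` not occurring in `M₂`. -/
def seq (m n : Tm) : Tm := .app (.lam (shift 0 n)) m

/-- `try (⟦n⟧ (); K₀) with Ex(c) → K₁[c]`, where the handler `K₁` has de Bruijn
index 0 for the caught value `c`. -/
def testTerm (n : ℕ) (K₀ K₁ : Tm) : Tm :=
  .tryc (seq (.app (encNat n) .unit) K₀) K₁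


lemma subst_shift (t : Tm) : ∀ k s, subst k s (shift k t) = t := by
  induction t with
  | var n =>
      intro k s
      simp only [shift, subst]
      by_cases h : n < k
      · simp [h, Nat.ne_of_lt h, Nat.not_lt.mpr (Nat.le_of_lt h), subst]
      · have h1 : n + 1 ≠ k := by omega
        have h2 : k < n + 1 := by omega
        simp [h, subst, h1, h2]
  | lam m ih => intro k s; simp [shift, subst, ih]
  | app m n ihm ihn => intro k s; simp [shift, subst, ihm, ihn]
  | fix m ih => intro k s; simp [shift, subst, ih]
  | ite a b c iha ihb ihc => intro k s; simp [shift, subst, iha, ihb, ihc]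
  | raise m ih => intro k s; simp [shift, subst, ih]
  | tryc m h ihm ihh => intro k s; simp [shift, subst, ihm, ihh]
  | fail => intro k s; simp [shift, subst]
  | unit => intro k s; simp [shift, subst]
  | tt => intro k s; simp [shift, subst]
  | ff => intro k s; simp [shift, subst]

lemma encNat_shift (m : ℕ) : ∀ c, shift c (encNat m) = encNat m := by
  induction m with
  | zero => intro c; simp [encNat, shift]
  | succ m ih => intro c; simp [encNat, shift, ih]

lemma encNat_subst (m : ℕ) : ∀ k s, subst k s (encNat m) = encNat m := by
  induction m with
  | zero => intro k s; simp [encNat, subst]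
  | succ m ih => intro k s; simp [encNat, subst, ih]

/-- Correctness of the encoded counter's zero-test and decrement:
`try (⟦n⟧ (); K₀) with Ex(c) → K₁[c]` reduces to `K₀` if `n = 0`,
and to `K₁[⟦n-1⟧]` if `n > 0`. -/
theorem counter_test_correct (n : ℕ) (K₀ K₁ : Tm) (hK₀ : IsValue K₀) :
    (n = 0 → Relation.ReflTransGen StepE (testTerm n K₀ K₁) K₀) ∧
    (∀ m : ℕ, n = m + 1 →
      Relation.ReflTransGen StepE (testTerm n K₀ K₁) (subst 0 (encNat m) K₁)) := by
  constructor
  · rintro rfl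
    have s1 : StepE (testTerm 0 K₀ K₁)
        (.tryc (.app (.lam (shift 0 K₀)) .unit) K₁) := by
      have := StepE.ctx (E := .tryC (.appR (.lam (shift 0 K₀)) .hole) K₁)
        (CtxOk.tryC (CtxOk.appR (IsValue.lam _) CtxOk.hole))
        (Redex.beta (m := .var 0) IsValue.unit)
      simpa [testTerm, seq, encNat, plug, subst] using this
    have s2 : StepE (.tryc (.app (.lam (shift 0 K₀)) .unit) K₁)
        (.tryc K₀ K₁) := by
      have := StepE.ctx (E := .tryC .hole K₁) (CtxOk.tryC CtxOk.hole)
        (Redex.beta (m := shift 0 K₀) IsValue.unit)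
      simpa [plug, subst_shift] using this
    have s3 : StepE (.tryc K₀ K₁) K₀ := by
      have := StepE.tryVal (E := .hole) (v := K₀) (h := K₁) CtxOk.hole hK₀
      simpa [plug] using this
    exact Relation.ReflTransGen.head s1 (Relation.ReflTransGen.head s2 (Relation.ReflTransGen.head s3 .refl))
  · rintro m rfl
    have s1 : StepE (testTerm (m + 1) K₀ K₁)
        (.tryc (.app (.lam (shift 0 K₀)) (.raise (encNat m))) K₁) := by
      have := StepE.ctx (E := .tryC (.appR (.lam (shift 0 K₀)) .hole) K₁)
        (CtxOk.tryC (CtxOk.appR (IsValue.lam _) CtxOk.hole))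
        (Redex.beta (m := .raise (encNat m)) IsValue.unit)
      simpa [testTerm, seq, encNat, plug, subst, encNat_subst] using this
    have s2 : StepE (.tryc (.app (.lam (shift 0 K₀)) (.raise (encNat m))) K₁)
        (subst 0 (encNat m) K₁) := by
      have hv : IsValue (encNat m) := by
        cases m <;> exact IsValue.lam _
      have := StepE.tryRaise (E := .hole)
        (E' := .appR (.lam (shift 0 K₀)) .hole) (v := encNat m) (h := K₁)
        CtxOk.hole (CtxOk.appR (IsValue.lam _) CtxOk.hole)
        (NoTry.appR NoTry.hole) hv
      simpa [plug] using this
    exact Relation.ReflTransGen.head s1 (Relation.ReflTransGen.head s2 .refl)
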